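/- Let U_l ∈ ℝ^{n_l×k_l}, U_r ∈ ℝ^{n_r×k_r}, B ∈ ℝ^{(k_l k_r)×k} have orthonormal columns and set U = (U_r ⊗ U_l) B. Writing P_M^⊥ = I − MMᵀ for the projection onto the orthogonal complement of the column space of a matrix M with orthonormal columns, one has (U_rᵀ ⊗ P_{U_l}^⊥)(I − UUᵀ) = U_rᵀ ⊗ P_{U_l}^⊥. -/
import Mathlib


open Matrix
open scoped Kronecker

/-- With `U = (U_r ⊗ U_l) B` built from matrices with orthonormal columns, one has
`(U_rᵀ ⊗ P_{U_l}^⊥)(I − U Uᵀ) = U_rᵀ ⊗ P_{U_l}^⊥`, where `P_M^⊥ = I − M Mᵀ`. -/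
theorem kronecker_proj_identity {nl nr kl kr k : Type*}
    [Fintype nl] [Fintype nr] [Fintype kl] [Fintype kr] [Fintype k]
    [DecidableEq nl] [DecidableEq nr] [DecidableEq kl] [DecidableEq kr] [DecidableEq k]
    (Ul : Matrix nl kl ℝ) (Ur : Matrix nr kr ℝ) (B : Matrix (kr × kl) k ℝ)
    (hUl : Ulᵀ * Ul = 1) (hUr : Urᵀ * Ur = 1) (hB : Bᵀ * B = 1) :
    (Urᵀ ⊗ₖ (1 - Ul * Ulᵀ)) *
        (1 - ((Ur ⊗ₖ Ul) * B) * ((Ur ⊗ₖ Ul) * B)ᵀ) =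
      Urᵀ ⊗ₖ (1 - Ul * Ulᵀ) := by
  have key : (Urᵀ ⊗ₖ (1 - Ul * Ulᵀ)) * (Ur ⊗ₖ Ul) = 0 := by
    rw [← Matrix.mul_kronecker_mul]
    have : (1 - Ul * Ulᵀ) * Ul = 0 := by
      rw [Matrix.sub_mul, Matrix.one_mul, Matrix.mul_assoc, hUl, Matrix.mul_one, sub_self]
    rw [this, Matrix.kronecker_zero]
  rw [Matrix.mul_sub, Matrix.mul_one, ← Matrix.mul_assoc, ← Matrix.mul_assoc, key, Matrix.zero_mul,
    Matrix.zero_mul, sub_zero]
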